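/- arXiv:1810.06101 — 3 statements merged into one kernel-verified Lean document; each statement's English description precedes it below -/
import Mathlib

section
/- Let Δ ∈ L²(Ω×[0,T], P⊗μ) be jointly measurable and set r_t = ∫₀ᵗ Δ_u du. Then E[∫₀ᵀ (a·Δ_t² + φ·r_t² + 2Ψ·Δ_t·r_t) dt] = E[∫₀ᵀ (a·Δ_t² + φ·r_t²) dt] + Ψ·E[r_T²], and this quantity is strictly positive whenever the set {(x,t) : Δ_t(x) ≠ 0} has positive P⊗μ-measure. -/
/-!
The primitive `r = ∫₀^· Δ` of a path in `L²[0, T]` is absolutely continuous with `r' = Δ` a.e.,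
so integration by parts gives `∫₀ᵀ 2 Δ r = r_T²` pathwise. The cross term `2ΨΔr` therefore
contributes `Ψ r_T² ≥ 0`, and the remaining quadratic form `aΔ² + φr²` is positive as soon as
`Δ ≠ 0` on a set of positive measure. Cauchy–Schwarz (`r_t² ≤ T ∫₀ᵀ Δ²`) makes every term
integrable over `Ω`.
-/

open MeasureTheory Set

theorem sq_intervalIntegral_eq_two_mul_integral_mul_primitive {g : ℝ → ℝ} {a b : ℝ}
    (hg : IntervalIntegrable g volume a b) :
    (∫ t in a..b, g t) ^ 2 = 2 * ∫ t in a..b, g t * ∫ u in a..t, g u := by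
  set G : ℝ → ℝ := fun t => ∫ u in a..t, g u
  have hG : AbsolutelyContinuousOnInterval G a b :=
    hg.absolutelyContinuousOnInterval_intervalIntegral left_mem_uIcc
  have hderiv : ∀ᵐ t, t ∈ uIoc a b → deriv G t = g t := by
    filter_upwards [hg.ae_hasDerivAt_integral] with t ht ht'
    exact (ht (uIoc_subset_uIcc ht') a left_mem_uIcc).deriv
  have hparts := hG.integral_deriv_mul_eq_sub hG
  simp only [G, intervalIntegral.integral_same, mul_zero, sub_zero] at hparts
  rw [sq, ← hparts, ← intervalIntegral.integral_const_mul]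
  refine intervalIntegral.integral_congr_ae ?_
  filter_upwards [hderiv] with t ht ht'
  rw [ht ht']
  ring

theorem sq_integral_le_measureReal_univ_mul_integral_sq {α : Type*} [MeasurableSpace α]
    {μ : Measure α} [IsFiniteMeasure μ] {g : α → ℝ} (hg : MemLp g 2 μ) :
    (∫ x, g x ∂μ) ^ 2 ≤ μ.real univ * ∫ x, g x ^ 2 ∂μ := by
  set m := μ.real univ
  set I := ∫ x, g x ∂μ
  rcases (measureReal_nonneg : 0 ≤ m).eq_or_lt with hm | hm
  · have hμ : μ = 0 := Measure.measure_univ_eq_zero.1 ((measureReal_eq_zero_iff).1 hm.symm)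
    simp [I, hμ]
  have hint := hg.integrable one_le_two
  have hexpand : ∫ x, (m * g x - I) ^ 2 ∂μ = m * (m * ∫ x, g x ^ 2 ∂μ - I ^ 2) := by
    have hsq : Integrable (fun x => m ^ 2 * g x ^ 2) μ := hg.integrable_sq.const_mul _
    have hlin : Integrable (fun x => 2 * m * I * g x) μ := hint.const_mul _
    calc ∫ x, (m * g x - I) ^ 2 ∂μ
        = ∫ x, (m ^ 2 * g x ^ 2 - 2 * m * I * g x) + I ^ 2 ∂μ := by congr 1; ext x; ring
      _ = m * (m * ∫ x, g x ^ 2 ∂μ - I ^ 2) := by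
        rw [integral_add (f := fun x => m ^ 2 * g x ^ 2 - 2 * m * I * g x) (hsq.sub hlin)
          (integrable_const _), integral_sub hsq hlin,
          integral_const_mul, integral_const_mul, integral_const, smul_eq_mul]
        ring
  have hnonneg : 0 ≤ m * (m * ∫ x, g x ^ 2 ∂μ - I ^ 2) :=
    hexpand ▸ integral_nonneg fun x => sq_nonneg _
  nlinarith [(mul_nonneg_iff_of_pos_left hm).1 hnonneg]

section Primitive

variable {g : ℝ → ℝ} {t T : ℝ}

theorem intervalIntegrable_of_memLp_two (hT : 0 ≤ T)
    (hg : MemLp g 2 (volume.restrict (Ioc 0 T))) : IntervalIntegrable g volume 0 T :=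
  (intervalIntegrable_iff_integrableOn_Ioc_of_le hT).2 (hg.integrable one_le_two)

theorem intervalIntegrable_sq_of_memLp_two (hT : 0 ≤ T)
    (hg : MemLp g 2 (volume.restrict (Ioc 0 T))) :
    IntervalIntegrable (fun t => g t ^ 2) volume 0 T :=
  (intervalIntegrable_iff_integrableOn_Ioc_of_le hT).2 hg.integrable_sq

theorem continuousOn_primitive_of_memLp_two (hT : 0 ≤ T)
    (hg : MemLp g 2 (volume.restrict (Ioc 0 T))) :
    ContinuousOn (fun t => ∫ u in 0..t, g u) (uIcc 0 T) :=
  intervalIntegral.continuousOn_primitive_interval' (intervalIntegrable_of_memLp_two hT hg)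
    left_mem_uIcc

theorem intervalIntegrable_sq_primitive_of_memLp_two (hT : 0 ≤ T)
    (hg : MemLp g 2 (volume.restrict (Ioc 0 T))) :
    IntervalIntegrable (fun t => (∫ u in 0..t, g u) ^ 2) volume 0 T :=
  ((continuousOn_primitive_of_memLp_two hT hg).pow 2).intervalIntegrable

theorem sq_primitive_le_mul_integral_sq (ht : t ∈ Icc 0 T)
    (hg : MemLp g 2 (volume.restrict (Ioc 0 T))) :
    (∫ u in 0..t, g u) ^ 2 ≤ T * ∫ u in 0..T, g u ^ 2 := by
  have hgt : MemLp g 2 (volume.restrict (Ioc 0 t)) :=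
    hg.mono_measure (Measure.restrict_mono (Ioc_subset_Ioc_right ht.2) le_rfl)
  rw [intervalIntegral.integral_of_le ht.1, intervalIntegral.integral_of_le (ht.1.trans ht.2)]
  calc (∫ u in Ioc 0 t, g u) ^ 2 ≤ t * ∫ u in Ioc 0 t, g u ^ 2 := by
        simpa [measureReal_restrict_apply_univ, Real.volume_real_Ioc_of_le ht.1] using
          sq_integral_le_measureReal_univ_mul_integral_sq hgt
    _ ≤ T * ∫ u in Ioc 0 T, g u ^ 2 :=
        mul_le_mul ht.2 (setIntegral_mono_set hg.integrable_sq
          (.of_forall fun u => sq_nonneg _) (.of_forall (Ioc_subset_Ioc_right ht.2)))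
          (integral_nonneg fun u => sq_nonneg _) (ht.1.trans ht.2)

theorem intervalIntegral_sq_add_sq_primitive (a φ : ℝ) (hT : 0 ≤ T)
    (hg : MemLp g 2 (volume.restrict (Ioc 0 T))) :
    ∫ t in 0..T, (a * g t ^ 2 + φ * (∫ u in 0..t, g u) ^ 2)
      = a * (∫ t in 0..T, g t ^ 2) + φ * ∫ t in 0..T, (∫ u in 0..t, g u) ^ 2 := by
  rw [intervalIntegral.integral_add ((intervalIntegrable_sq_of_memLp_two hT hg).const_mul a)
    ((intervalIntegrable_sq_primitive_of_memLp_two hT hg).const_mul φ),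
    intervalIntegral.integral_const_mul, intervalIntegral.integral_const_mul]

theorem intervalIntegral_quadratic_primitive (a φ Ψ : ℝ) (hT : 0 ≤ T)
    (hg : MemLp g 2 (volume.restrict (Ioc 0 T))) :
    ∫ t in 0..T, (a * g t ^ 2 + φ * (∫ u in 0..t, g u) ^ 2
        + 2 * Ψ * g t * ∫ u in 0..t, g u)
      = (∫ t in 0..T, (a * g t ^ 2 + φ * (∫ u in 0..t, g u) ^ 2))
        + Ψ * (∫ u in 0..T, g u) ^ 2 := by
  have hgi := intervalIntegrable_of_memLp_two hT hg
  have hquad : IntervalIntegrable (fun t => a * g t ^ 2 + φ * (∫ u in 0..t, g u) ^ 2) volume 0 T :=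
    ((intervalIntegrable_sq_of_memLp_two hT hg).const_mul a).add
      ((intervalIntegrable_sq_primitive_of_memLp_two hT hg).const_mul φ)
  have hcross : IntervalIntegrable (fun t => Ψ * (2 * (g t * ∫ u in 0..t, g u))) volume 0 T :=
    ((hgi.mul_continuousOn (continuousOn_primitive_of_memLp_two hT hg)).const_mul 2).const_mul Ψ
  rw [sq_intervalIntegral_eq_two_mul_integral_mul_primitive hgi,
    ← intervalIntegral.integral_const_mul, ← intervalIntegral.integral_const_mul,
    ← intervalIntegral.integral_add hquad hcross]
  congr 1
  ext t
  ring

end Primitive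

theorem ae_memLp_two_prodMk_left {α β : Type*} [MeasurableSpace α] [MeasurableSpace β]
    {μ : Measure α} {ν : Measure β} [SFinite μ] [SFinite ν] {f : α × β → ℝ}
    (hf : MemLp f 2 (μ.prod ν)) : ∀ᵐ x ∂μ, MemLp (fun y => f (x, y)) 2 ν := by
  filter_upwards [hf.1.prodMk_left, hf.integrable_sq.prod_right_ae] with x hxm hxi
  exact (memLp_two_iff_integrable_sq hxm).2 hxi

section PathIntegrals

variable {Ω : Type*} [MeasurableSpace Ω] {P : Measure Ω} {T : ℝ}

theorem aestronglyMeasurable_primitive [SFinite P] {E : Type*} [NormedAddCommGroup E]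
    [NormedSpace ℝ E] {f : Ω × ℝ → E}
    (hf : AEStronglyMeasurable f (P.prod (volume.restrict (Ioc 0 T)))) :
    AEStronglyMeasurable (fun p : Ω × ℝ => ∫ u in 0..p.2, f (p.1, u))
      (P.prod (volume.restrict (Ioc 0 T))) := by
  set ν := volume.restrict (Ioc (0:ℝ) T)
  -- `∫₀ᵗ f (x, u) du` is the parametric integral of `((x, t), u) ↦ 1{u ≤ t} f (x, u)` over `u`
  have hπ : Measure.QuasiMeasurePreserving (fun q : (Ω × ℝ) × ℝ => (q.1.1, q.2))
      ((P.prod ν).prod ν) (P.prod ν) :=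
    QuasiMeasurePreserving.prodMap Measure.quasiMeasurePreserving_fst
      (Measure.QuasiMeasurePreserving.id ν)
  have hF := (hf.comp_quasiMeasurePreserving hπ).indicator
    (measurableSet_le measurable_snd (measurable_snd.comp measurable_fst))
  refine hF.integral_prod_right'.congr ?_
  filter_upwards [Measure.quasiMeasurePreserving_snd.ae (ae_restrict_mem measurableSet_Ioc)]
    with p hp
  change ∫ u, (Iic p.2).indicator (fun u => f (p.1, u)) u ∂ν = _
  rw [intervalIntegral.integral_of_le hp.1.le, integral_indicator measurableSet_Iic,
    Measure.restrict_restrict measurableSet_Iic, Iic_inter_Ioc_of_le hp.2]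

variable {f : Ω × ℝ → ℝ}

theorem integrable_intervalIntegral_sq (hT : 0 ≤ T)
    (hf : MemLp f 2 (P.prod (volume.restrict (Ioc 0 T)))) :
    Integrable (fun x => ∫ t in 0..T, f (x, t) ^ 2) P := by
  simp only [intervalIntegral.integral_of_le hT]
  exact hf.integrable_sq.integral_prod_left

theorem integrable_sq_primitive [SFinite P] (hT : 0 ≤ T)
    (hf : MemLp f 2 (P.prod (volume.restrict (Ioc 0 T)))) :
    Integrable (fun x => (∫ u in 0..T, f (x, u)) ^ 2) P := by
  refine ((integrable_intervalIntegral_sq hT hf).const_mul T).mono' ?_ ?_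
  · simp only [intervalIntegral.integral_of_le hT]
    exact hf.1.integral_prod_right'.pow 2
  · filter_upwards [ae_memLp_two_prodMk_left hf] with x hx
    rw [Real.norm_eq_abs, abs_of_nonneg (sq_nonneg _)]
    exact sq_primitive_le_mul_integral_sq ⟨hT, le_rfl⟩ hx

theorem integrable_integral_sq_primitive [SFinite P] (hT : 0 ≤ T)
    (hf : MemLp f 2 (P.prod (volume.restrict (Ioc 0 T)))) :
    Integrable (fun x => ∫ t in 0..T, (∫ u in 0..t, f (x, u)) ^ 2) P := by
  refine ((integrable_intervalIntegral_sq hT hf).const_mul (T ^ 2)).mono' ?_ ?_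
  · simp only [intervalIntegral.integral_of_le hT]
    exact ((aestronglyMeasurable_primitive hf.1).pow 2).integral_prod_right'
  · filter_upwards [ae_memLp_two_prodMk_left hf] with x hx
    rw [Real.norm_eq_abs,
      abs_of_nonneg (intervalIntegral.integral_nonneg hT fun _ _ => sq_nonneg _)]
    calc ∫ t in 0..T, (∫ u in 0..t, f (x, u)) ^ 2
        ≤ ∫ t in 0..T, T * ∫ u in 0..T, f (x, u) ^ 2 :=
          intervalIntegral.integral_mono_on hT (intervalIntegrable_sq_primitive_of_memLp_two hT hx)
            intervalIntegrable_const fun t ht => sq_primitive_le_mul_integral_sq ht hx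
      _ = T ^ 2 * ∫ t in 0..T, f (x, t) ^ 2 := by
          rw [intervalIntegral.integral_const, smul_eq_mul]
          ring

theorem integral_intervalIntegral_sq_pos [SFinite P] (hT : 0 ≤ T)
    (hf : MemLp f 2 (P.prod (volume.restrict (Ioc 0 T))))
    (hpos : 0 < P.prod (volume.restrict (Ioc 0 T)) {p | f p ≠ 0}) :
    0 < ∫ x, (∫ t in 0..T, f (x, t) ^ 2) ∂P := by
  simp only [intervalIntegral.integral_of_le hT]
  rw [← integral_prod _ hf.integrable_sq]
  refine (integral_pos_iff_support_of_nonneg (fun p => sq_nonneg _) hf.integrable_sq).2 ?_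
  simpa [Function.support] using hpos

end PathIntegrals

/-- core quadratic-form positivity in the proof of Lemma 3.1:
for `r_t = ∫₀ᵗ Δ_u du`,
`E[∫₀ᵀ (a·Δ² + φ·r² + 2Ψ·Δ·r) dt] = E[∫₀ᵀ (a·Δ² + φ·r²) dt] + Ψ·E[r_T²]`,
and this quantity is strictly positive whenever `{Δ ≠ 0}` has positive `P⊗μ`-measure. -/
theorem quadratic_form_positivity
    {Ω : Type*} [MeasurableSpace Ω]
    (P : Measure Ω) [IsProbabilityMeasure P]
    (T : ℝ) (hT : 0 < T) (a Ψ φ : ℝ) (ha : 0 < a) (hΨ : 0 ≤ Ψ) (hφ : 0 ≤ φ)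
    (μ : Measure ℝ) (hμ : μ = volume.restrict (Set.Icc (0:ℝ) T))
    (Δ : Ω × ℝ → ℝ) (hΔ : MemLp Δ 2 (P.prod μ))
    (r : Ω → ℝ → ℝ) (hr : ∀ x t, r x t = ∫ u in (0:ℝ)..t, Δ (x, u)) :
    (∫ x, (∫ t in (0:ℝ)..T,
        (a * (Δ (x, t)) ^ 2 + φ * (r x t) ^ 2 + 2 * Ψ * Δ (x, t) * r x t)) ∂P)
      = (∫ x, (∫ t in (0:ℝ)..T, (a * (Δ (x, t)) ^ 2 + φ * (r x t) ^ 2)) ∂P)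
        + Ψ * (∫ x, (r x T) ^ 2 ∂P)
    ∧ (0 < (P.prod μ) {p | Δ p ≠ 0} →
        0 < ∫ x, (∫ t in (0:ℝ)..T,
          (a * (Δ (x, t)) ^ 2 + φ * (r x t) ^ 2 + 2 * Ψ * Δ (x, t) * r x t)) ∂P) := by
  obtain rfl : r = fun x t => ∫ u in (0:ℝ)..t, Δ (x, u) := funext fun x => funext (hr x)
  obtain rfl : μ = volume.restrict (Ioc 0 T) :=
    hμ.trans (Measure.restrict_congr_set Ioc_ae_eq_Icc).symm
  have hpaths := ae_memLp_two_prodMk_left hΔ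
  have hE := integrable_intervalIntegral_sq hT.le hΔ
  have hR := integrable_integral_sq_primitive hT.le hΔ
  have hsplit := hpaths.mono fun x hx => intervalIntegral_sq_add_sq_primitive a φ hT.le hx
  have hquad := ((hE.const_mul a).add (hR.const_mul φ)).congr (hsplit.mono fun _ h => h.symm)
  have hcross := hpaths.mono fun x hx => intervalIntegral_quadratic_primitive a φ Ψ hT.le hx
  rw [integral_congr_ae hcross,
    integral_add hquad ((integrable_sq_primitive hT.le hΔ).const_mul Ψ), integral_const_mul]
  refine ⟨rfl, fun hpos => ?_⟩
  rw [integral_congr_ae hsplit, integral_add (hE.const_mul a) (hR.const_mul φ),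
    integral_const_mul, integral_const_mul]
  have hEpos := integral_intervalIntegral_sq_pos hT.le hΔ hpos
  have hRnonneg : 0 ≤ ∫ x, (∫ t in (0:ℝ)..T, (∫ u in (0:ℝ)..t, Δ (x, u)) ^ 2) ∂P :=
    integral_nonneg fun x => intervalIntegral.integral_nonneg hT.le fun _ _ => sq_nonneg _
  have hBnonneg : 0 ≤ ∫ x, (∫ u in (0:ℝ)..T, Δ (x, u)) ^ 2 ∂P :=
    integral_nonneg fun x => sq_nonneg _
  positivity
end

section
/- For every ν, ω ∈ L²(Ω×[0,T], P⊗μ), the Gâteaux derivative of H at ν in the direction ω exists; that is, the limit as ε→0 of (H(ν+εω) − H(ν))/ε exists and equals E[∫₀ᵀ ω_t·( −2a·ν_t − 2Ψ·q^ν_T + ∫_t^T (α_u − 2φ·q^ν_u) du ) dt]. -/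
open MeasureTheory

noncomputable section

variable {Ω : Type*} [MeasurableSpace Ω]

/-- The inventory process `q^ν_t = Q₀ + ∫₀ᵗ ν_u du`. -/
def inventory (Q₀ : Ω → ℝ) (ν : Ω × ℝ → ℝ) (x : Ω) (t : ℝ) : ℝ :=
  Q₀ x + ∫ u in (0:ℝ)..t, ν (x, u)

/-- The limiting mean-field objective functional
`H(ν) = E[∫₀ᵀ ( q^ν_t·α_t − a·ν_t² − 2Ψ·ν_t·q^ν_t − φ·(q^ν_t)² ) dt]`. -/
def objH (P : Measure Ω) (T a Ψ φ : ℝ) (Q₀ : Ω → ℝ) (α ν : Ω × ℝ → ℝ) : ℝ :=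
  ∫ x, (∫ t in (0:ℝ)..T,
    (inventory Q₀ ν x t * α (x, t) - a * (ν (x, t)) ^ 2
      - 2 * Ψ * ν (x, t) * inventory Q₀ ν x t
      - φ * (inventory Q₀ ν x t) ^ 2)) ∂P

/-!
For fixed `ν` and `w`, `ε ↦ H(ν + εw)` is a quadratic polynomial: pathwise, the running reward is
quadratic in `(ν, q^ν)` and `q^{ν+εw} = q^ν + ε q^w`, where `q^w` is the primitive of `w`
started at `0`. Its three coefficients are expectations of integrable functions, because they are
linear combinations of the pathwise objectives at `ν` and `ν ± w`, each integrable since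
`|∫₀ᵗ ν|² ≤ T ∫₀ᵀ ν²` puts `q^ν` in `L²(P ⊗ μ)`. The linear coefficient contains
`∫₀ᵀ (∫₀ᵗ w) g(t) dt`; exchanging the order of integration over `{s ≤ t}` turns it into
`∫₀ᵀ w(s) ∫ₛᵀ g`, which is the stated formula.
-/

open Set Filter Topology

section General

variable {X Y : Type*} [MeasurableSpace X] [MeasurableSpace Y] {μ : Measure X}

theorem sq_integral_le_measureReal_mul_integral_sq [IsFiniteMeasure μ] {f : X → ℝ}
    (hf : MemLp f 2 μ) : (∫ x, f x ∂μ) ^ 2 ≤ μ.real univ * ∫ x, f x ^ 2 ∂μ := by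
  rcases eq_zero_or_neZero μ with rfl | _
  · simp
  have hμ : 0 < μ.real univ := measureReal_univ_pos
  have jensen := (Even.convexOn_pow even_two).map_average_le (continuous_pow 2).continuousOn
    isClosed_univ (ae_of_all _ fun _ => mem_univ _) (hf.integrable one_le_two) hf.integrable_sq
  simp only [average_eq, smul_eq_mul] at jensen
  rw [mul_pow, inv_pow, ← div_eq_inv_mul, ← div_eq_inv_mul,
    div_le_div_iff₀ (by positivity) hμ] at jensen
  nlinarith

theorem MeasureTheory.MemLp.ae_memLp_prodMk [SFinite μ] {ν : Measure Y} [SFinite ν]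
    {f : X × Y → ℝ} (hf : MemLp f 2 (μ.prod ν)) : ∀ᵐ x ∂μ, MemLp (fun y => f (x, y)) 2 ν := by
  filter_upwards [hf.1.prodMk_left, hf.integrable_sq.prod_right_ae] with x hmeas hsq
  exact (memLp_two_iff_integrable_sq hmeas).2 hsq

theorem integrable_reward {q A V : X → ℝ} (a Ψ φ : ℝ) (hq : MemLp q 2 μ) (hA : MemLp A 2 μ)
    (hV : MemLp V 2 μ) :
    Integrable (fun z => q z * A z - a * V z ^ 2 - 2 * Ψ * V z * q z - φ * q z ^ 2) μ :=
  (((hq.integrable_mul hA).sub (hV.integrable_sq.const_mul a)).sub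
    ((hV.const_mul (2 * Ψ)).integrable_mul hq)).sub (hq.integrable_sq.const_mul φ)

theorem integral_eq_quadratic {g : ℝ → X → ℝ} {g₀ g₁ g₂ : X → ℝ}
    (hg : ∀ ε, Integrable (g ε) μ)
    (hquad : ∀ᵐ x ∂μ, ∀ ε, g ε x = g₀ x + ε * g₁ x + ε ^ 2 * g₂ x) (ε : ℝ) :
    ∫ x, g ε x ∂μ = ∫ x, g₀ x ∂μ + ε * ∫ x, g₁ x ∂μ + ε ^ 2 * ∫ x, g₂ x ∂μ := by
  have h₀ : Integrable g₀ μ := (hg 0).congr (by filter_upwards [hquad] with x hx; simp [hx])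
  have h₁ : Integrable g₁ μ := (((hg 1).sub (hg (-1))).div_const 2).congr <| by
    filter_upwards [hquad] with x hx; simp only [Pi.sub_apply, hx]; ring
  have h₂ : Integrable g₂ μ := ((((hg 1).add (hg (-1))).div_const 2).sub (hg 0)).congr <| by
    filter_upwards [hquad] with x hx; simp only [Pi.sub_apply, Pi.add_apply, hx]; ring
  rw [integral_congr_ae (hquad.mono fun x hx => hx ε), integral_add, integral_add,
    integral_const_mul, integral_const_mul]
  exacts [h₀, h₁.const_mul ε, h₀.add (h₁.const_mul ε), h₂.const_mul _]

theorem tendsto_slope_quadratic (c₀ c₁ c₂ : ℝ) :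
    Tendsto (fun ε : ℝ => (c₀ + ε * c₁ + ε ^ 2 * c₂ - c₀) / ε) (𝓝[≠] 0) (𝓝 c₁) := by
  have hcont : Continuous fun ε : ℝ => c₁ + ε * c₂ := by fun_prop
  have := hcont.tendsto 0
  rw [zero_mul, add_zero] at this
  refine (this.mono_left nhdsWithin_le_nhds).congr'
    (eventually_nhdsWithin_of_forall fun ε (hε : ε ≠ 0) => ?_)
  field_simp
  ring

end General

section Interval

variable {T : ℝ}

theorem ContinuousOn.memLp_restrict_Ioc {f : ℝ → ℝ} {a b : ℝ} (hf : ContinuousOn f (Icc a b))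
    (p : ENNReal) : MemLp f p (volume.restrict (Ioc a b)) := by
  obtain ⟨C, hC⟩ := isCompact_Icc.exists_bound_of_continuousOn hf
  refine (memLp_top_of_bound ((hf.mono Ioc_subset_Icc_self).aestronglyMeasurable
    measurableSet_Ioc) C ?_).mono_exponent le_top
  exact ae_restrict_of_forall_mem measurableSet_Ioc fun t ht => hC t (Ioc_subset_Icc_self ht)

theorem MeasureTheory.IntegrableOn.intervalIntegrable_of_mem_Icc {f : ℝ → ℝ}
    (hf : IntegrableOn f (Ioc 0 T)) {c d : ℝ} (hc : c ∈ Icc 0 T) (hd : d ∈ Icc 0 T) :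
    IntervalIntegrable f volume c d := by
  rw [intervalIntegrable_iff]
  exact hf.mono_set (Ioc_subset_Ioc (le_inf hc.1 hd.1) (sup_le hc.2 hd.2))

theorem memLp_primitive (hT : 0 ≤ T) {f : ℝ → ℝ} (hf : IntegrableOn f (Ioc 0 T)) (p : ENNReal) :
    MemLp (fun t => ∫ u in (0:ℝ)..t, f u) p (volume.restrict (Ioc 0 T)) := by
  refine ContinuousOn.memLp_restrict_Ioc ?_ p
  rw [← uIcc_of_le hT]
  exact intervalIntegral.continuousOn_primitive_interval
    (by rwa [uIcc_of_le hT, integrableOn_Icc_iff_integrableOn_Ioc])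

theorem memLp_tail (hT : 0 ≤ T) {f : ℝ → ℝ} (hf : IntegrableOn f (Ioc 0 T)) (p : ENNReal) :
    MemLp (fun t => ∫ u in t..T, f u) p (volume.restrict (Ioc 0 T)) := by
  refine ContinuousOn.memLp_restrict_Ioc ?_ p
  rw [← uIcc_of_le hT]
  exact intervalIntegral.continuousOn_primitive_interval_left
    (by rwa [uIcc_of_le hT, integrableOn_Icc_iff_integrableOn_Ioc])

theorem intervalIntegral_eq_integral_indicator_Iic (f : ℝ → ℝ) {t : ℝ} (ht : t ∈ Icc 0 T) :
    ∫ u in (0:ℝ)..t, f u = ∫ u in Ioc 0 T, (Iic t).indicator f u := by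
  rw [setIntegral_indicator measurableSet_Iic, Ioc_inter_Iic, inf_eq_right.2 ht.2,
    intervalIntegral.integral_of_le ht.1]

theorem intervalIntegral_eq_integral_indicator_Ici (f : ℝ → ℝ) {s : ℝ} (hs : s ∈ Icc 0 T) :
    ∫ u in s..T, f u = ∫ u in Ioc 0 T, (Ici s).indicator f u := by
  rw [integral_congr_ae (indicator_ae_eq_of_ae_eq_set (ae_restrict_of_ae Ioi_ae_eq_Ici.symm)),
    setIntegral_indicator measurableSet_Ioi, Ioc_inter_Ioi, sup_eq_right.2 hs.1,
    intervalIntegral.integral_of_le hs.2]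

theorem sq_primitive_le {f : ℝ → ℝ} (hf : MemLp f 2 (volume.restrict (Ioc 0 T))) {t : ℝ}
    (ht : t ∈ Icc 0 T) : (∫ u in (0:ℝ)..t, f u) ^ 2 ≤ T * ∫ u in Ioc 0 T, f u ^ 2 := by
  rw [intervalIntegral_eq_integral_indicator_Iic f ht]
  refine (sq_integral_le_measureReal_mul_integral_sq (hf.indicator measurableSet_Iic)).trans ?_
  rw [measureReal_restrict_apply_univ, Real.volume_real_Ioc_of_le (ht.1.trans ht.2), sub_zero]
  refine mul_le_mul_of_nonneg_left (integral_mono_of_nonneg (ae_of_all _ fun _ => sq_nonneg _)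
    hf.integrable_sq (ae_of_all _ fun u => ?_)) (ht.1.trans ht.2)
  by_cases hu : u ∈ Iic t <;> simp [hu, sq_nonneg]

theorem integral_primitive_mul_eq (hT : 0 ≤ T) {f g : ℝ → ℝ} (hf : IntegrableOn f (Ioc 0 T))
    (hg : IntegrableOn g (Ioc 0 T)) :
    ∫ t in (0:ℝ)..T, (∫ s in (0:ℝ)..t, f s) * g t
      = ∫ s in (0:ℝ)..T, f s * ∫ t in s..T, g t := by
  set K : ℝ × ℝ → ℝ := {p | p.1 ≤ p.2}.indicator fun p => f p.1 * g p.2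
  have hK : Integrable K ((volume.restrict (Ioc 0 T)).prod (volume.restrict (Ioc 0 T))) :=
    (hf.mul_prod hg).indicator (measurableSet_le measurable_fst measurable_snd)
  simp only [intervalIntegral.integral_of_le hT]
  calc ∫ t in Ioc 0 T, (∫ s in (0:ℝ)..t, f s) * g t
      = ∫ t in Ioc 0 T, ∫ s in Ioc 0 T, K (s, t) :=
        setIntegral_congr_fun measurableSet_Ioc fun t ht => by
          rw [intervalIntegral_eq_integral_indicator_Iic f (Ioc_subset_Icc_self ht),
            ← integral_mul_const]
          congr with s
          by_cases hs : s ≤ t <;> simp [K, hs]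
    _ = ∫ s in Ioc 0 T, ∫ t in Ioc 0 T, K (s, t) := integral_integral_swap hK.swap
    _ = ∫ s in Ioc 0 T, f s * ∫ t in s..T, g t :=
        setIntegral_congr_fun measurableSet_Ioc fun s hs => by
          rw [intervalIntegral_eq_integral_indicator_Ici g (Ioc_subset_Icc_self hs),
            ← integral_const_mul]
          congr with t
          by_cases hst : s ≤ t <;> simp [K, hst]

end Interval

def pathInventory (Q : ℝ) (V : ℝ → ℝ) (t : ℝ) : ℝ := Q + ∫ u in (0:ℝ)..t, V u

def runningReward (a Ψ φ Q : ℝ) (A V : ℝ → ℝ) (t : ℝ) : ℝ :=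
  pathInventory Q V t * A t - a * V t ^ 2 - 2 * Ψ * V t * pathInventory Q V t
    - φ * pathInventory Q V t ^ 2

def pathObjective (T a Ψ φ Q : ℝ) (A V : ℝ → ℝ) : ℝ :=
  ∫ t in (0:ℝ)..T, runningReward a Ψ φ Q A V t

def pathDerivative (T a Ψ φ Q : ℝ) (A V W : ℝ → ℝ) : ℝ :=
  ∫ t in (0:ℝ)..T, W t * (-2 * a * V t - 2 * Ψ * pathInventory Q V T
    + ∫ u in t..T, (A u - 2 * φ * pathInventory Q V u))

section PathObjective

variable {T a Ψ φ Q : ℝ} {A V W : ℝ → ℝ}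

theorem memLp_pathInventory (hT : 0 ≤ T) (hV : MemLp V 2 (volume.restrict (Ioc 0 T))) :
    MemLp (pathInventory Q V) 2 (volume.restrict (Ioc 0 T)) :=
  (memLp_const Q).add (memLp_primitive hT (hV.integrable one_le_two) 2)

theorem integrable_runningReward (hT : 0 ≤ T) (hA : MemLp A 2 (volume.restrict (Ioc 0 T)))
    (hV : MemLp V 2 (volume.restrict (Ioc 0 T))) :
    Integrable (runningReward a Ψ φ Q A V) (volume.restrict (Ioc 0 T)) :=
  integrable_reward a Ψ φ (memLp_pathInventory hT hV) hA hV

theorem pathInventory_add_smul (hT : 0 ≤ T) (hV : IntegrableOn V (Ioc 0 T))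
    (hW : IntegrableOn W (Ioc 0 T)) (ε : ℝ) {t : ℝ} (ht : t ∈ Icc 0 T) :
    pathInventory Q (fun u => V u + ε * W u) t
      = pathInventory Q V t + ε * pathInventory 0 W t := by
  have h0 : (0:ℝ) ∈ Icc 0 T := ⟨le_rfl, hT⟩
  simp only [pathInventory, zero_add]
  rw [intervalIntegral.integral_add (hV.intervalIntegrable_of_mem_Icc h0 ht)
    ((hW.intervalIntegrable_of_mem_Icc h0 ht).const_mul ε), intervalIntegral.integral_const_mul,
    add_assoc]

theorem pathInventory_sub_pathInventory (hT : 0 ≤ T) (hV : IntegrableOn V (Ioc 0 T)) {t : ℝ}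
    (ht : t ∈ Icc 0 T) : pathInventory Q V T - pathInventory Q V t = ∫ u in t..T, V u := by
  have h0 : (0:ℝ) ∈ Icc 0 T := ⟨le_rfl, hT⟩
  rw [← intervalIntegral.integral_interval_sub_left
    (hV.intervalIntegrable_of_mem_Icc h0 ⟨hT, le_rfl⟩) (hV.intervalIntegrable_of_mem_Icc h0 ht)]
  simp only [pathInventory]
  ring

theorem pathDerivative_eq_integral_tails (hT : 0 ≤ T) (hA : IntegrableOn A (Ioc 0 T))
    (hV : MemLp V 2 (volume.restrict (Ioc 0 T))) :
    pathDerivative T a Ψ φ Q A V W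
      = ∫ t in Ioc 0 T, ((W t * ∫ u in t..T, A u) - 2 * a * (V t * W t)
          - 2 * Ψ * (W t * pathInventory Q V t + W t * ∫ u in t..T, V u)
          - 2 * φ * (W t * ∫ u in t..T, pathInventory Q V u)) := by
  have hq : IntegrableOn (pathInventory Q V) (Ioc 0 T) :=
    (memLp_pathInventory hT hV).integrable one_le_two
  rw [pathDerivative, intervalIntegral.integral_of_le hT]
  refine setIntegral_congr_fun measurableSet_Ioc fun t ht => ?_
  have ht' := Ioc_subset_Icc_self ht
  have hT' : T ∈ Icc 0 T := ⟨hT, le_rfl⟩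
  rw [intervalIntegral.integral_sub (hA.intervalIntegrable_of_mem_Icc ht' hT')
    ((hq.intervalIntegrable_of_mem_Icc ht' hT').const_mul _), intervalIntegral.integral_const_mul,
    ← pathInventory_sub_pathInventory hT (hV.integrable one_le_two) ht']
  ring

theorem pathDerivative_eq_integral (hT : 0 ≤ T) (hA : MemLp A 2 (volume.restrict (Ioc 0 T)))
    (hV : MemLp V 2 (volume.restrict (Ioc 0 T))) (hW : MemLp W 2 (volume.restrict (Ioc 0 T))) :
    pathDerivative T a Ψ φ Q A V W
      = ∫ t in Ioc 0 T, (pathInventory 0 W t * A t - 2 * a * (V t * W t)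
          - 2 * Ψ * (W t * pathInventory Q V t + pathInventory 0 W t * V t)
          - 2 * φ * (pathInventory 0 W t * pathInventory Q V t)) := by
  have hA₁ : IntegrableOn A (Ioc 0 T) := hA.integrable one_le_two
  rw [pathDerivative_eq_integral_tails hT hA₁ hV]
  set q := pathInventory Q V
  set r := pathInventory 0 W
  have hq : MemLp q 2 (volume.restrict (Ioc 0 T)) := memLp_pathInventory hT hV
  have hr : MemLp r 2 (volume.restrict (Ioc 0 T)) := memLp_pathInventory hT hW
  have hV₁ : IntegrableOn V (Ioc 0 T) := hV.integrable one_le_two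
  have hq₁ : IntegrableOn q (Ioc 0 T) := hq.integrable one_le_two
  have swap : ∀ {f : ℝ → ℝ}, IntegrableOn f (Ioc 0 T) →
      ∫ t in Ioc 0 T, r t * f t = ∫ t in Ioc 0 T, W t * ∫ u in t..T, f u := fun hf => by
    simpa only [r, pathInventory, zero_add, intervalIntegral.integral_of_le hT] using
      integral_primitive_mul_eq hT (hW.integrable one_le_two) hf
  have split : ∀ {X₁ X₂ X₃ X₄ X₅ : ℝ → ℝ}, IntegrableOn X₁ (Ioc 0 T) →
      IntegrableOn X₂ (Ioc 0 T) → IntegrableOn X₃ (Ioc 0 T) → IntegrableOn X₄ (Ioc 0 T) →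
      IntegrableOn X₅ (Ioc 0 T) →
      ∫ t in Ioc 0 T, (X₁ t - 2 * a * X₂ t - 2 * Ψ * (X₃ t + X₄ t) - 2 * φ * X₅ t)
        = (∫ t in Ioc 0 T, X₁ t) - 2 * a * (∫ t in Ioc 0 T, X₂ t)
          - 2 * Ψ * ((∫ t in Ioc 0 T, X₃ t) + ∫ t in Ioc 0 T, X₄ t)
          - 2 * φ * ∫ t in Ioc 0 T, X₅ t := fun h₁ h₂ h₃ h₄ h₅ => by
    unfold IntegrableOn at h₁ h₂ h₃ h₄ h₅
    rw [integral_sub (by fun_prop) (by fun_prop), integral_sub (by fun_prop) (by fun_prop),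
      integral_sub (by fun_prop) (by fun_prop), integral_const_mul,
      integral_const_mul, integral_const_mul, integral_add h₃ h₄]
  have hmul : ∀ {f g : ℝ → ℝ}, MemLp f 2 (volume.restrict (Ioc 0 T)) →
      MemLp g 2 (volume.restrict (Ioc 0 T)) → IntegrableOn (fun t => f t * g t) (Ioc 0 T) :=
    fun hf hg => hf.integrable_mul hg
  rw [split (hmul hW (memLp_tail hT hA₁ 2)) (hmul hV hW) (hmul hW hq)
      (hmul hW (memLp_tail hT hV₁ 2)) (hmul hW (memLp_tail hT hq₁ 2)),
    split (hmul hr hA) (hmul hV hW) (hmul hW hq) (hmul hr hV) (hmul hr hq),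
    swap hA₁, swap hV₁, swap hq₁]

theorem pathObjective_add_smul (hT : 0 ≤ T) (hA : MemLp A 2 (volume.restrict (Ioc 0 T)))
    (hV : MemLp V 2 (volume.restrict (Ioc 0 T))) (hW : MemLp W 2 (volume.restrict (Ioc 0 T)))
    (ε : ℝ) :
    pathObjective T a Ψ φ Q A (fun t => V t + ε * W t)
      = pathObjective T a Ψ φ Q A V + ε * pathDerivative T a Ψ φ Q A V W
        + ε ^ 2 * pathObjective T a Ψ φ 0 0 W := by
  rw [pathDerivative_eq_integral hT hA hV hW]
  simp only [pathObjective, intervalIntegral.integral_of_le hT]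
  refine integral_eq_quadratic (g := fun ε => runningReward a Ψ φ Q A fun t => V t + ε * W t)
    (fun ε => integrable_runningReward hT hA (hV.add (hW.const_mul ε))) ?_ ε
  filter_upwards [ae_restrict_mem measurableSet_Ioc] with t ht ε
  simp only [runningReward, Pi.zero_apply, pathInventory_add_smul hT (hV.integrable one_le_two)
    (hW.integrable one_le_two) ε (Ioc_subset_Icc_self ht)]
  ring

end PathObjective

section Product

variable {X : Type*} [MeasurableSpace X] {μ : Measure X} [SFinite μ] {T : ℝ}

theorem aestronglyMeasurable_primitive_prod {f : X × ℝ → ℝ}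
    (hf : AEStronglyMeasurable f (μ.prod (volume.restrict (Ioc 0 T)))) :
    AEStronglyMeasurable (fun z : X × ℝ => ∫ u in (0:ℝ)..z.2, f (z.1, u))
      (μ.prod (volume.restrict (Ioc 0 T))) := by
  have hK : AEStronglyMeasurable
      (fun p : (X × ℝ) × ℝ => (Iic p.1.2).indicator (fun u => f (p.1.1, u)) p.2)
      ((μ.prod (volume.restrict (Ioc 0 T))).prod (volume.restrict (Ioc 0 T))) :=
    (hf.comp_quasiMeasurePreserving (QuasiMeasurePreserving.prodMap
      Measure.quasiMeasurePreserving_fst (Measure.QuasiMeasurePreserving.id _))).indicator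
      (measurableSet_le measurable_snd measurable_fst.snd)
  refine hK.integral_prod_right'.congr ?_
  filter_upwards [Measure.quasiMeasurePreserving_snd.ae (ae_restrict_mem measurableSet_Ioc)]
    with z hz
  exact (intervalIntegral_eq_integral_indicator_Iic _ (Ioc_subset_Icc_self hz)).symm

theorem memLp_primitive_prod {f : X × ℝ → ℝ}
    (hf : MemLp f 2 (μ.prod (volume.restrict (Ioc 0 T)))) :
    MemLp (fun z : X × ℝ => ∫ u in (0:ℝ)..z.2, f (z.1, u)) 2
      (μ.prod (volume.restrict (Ioc 0 T))) := by
  have hmeas := aestronglyMeasurable_primitive_prod hf.1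
  rw [memLp_two_iff_integrable_sq hmeas]
  have hdom : Integrable (fun z : X × ℝ => T * ∫ u in Ioc 0 T, f (z.1, u) ^ 2)
      (μ.prod (volume.restrict (Ioc 0 T))) := by
    simpa using (hf.integrable_sq.integral_prod_left.const_mul T).mul_prod
      (integrable_const (1:ℝ))
  refine hdom.mono' (hmeas.pow 2) ?_
  filter_upwards [Measure.quasiMeasurePreserving_snd.ae (ae_restrict_mem measurableSet_Ioc),
    Measure.quasiMeasurePreserving_fst.ae hf.ae_memLp_prodMk] with z hz hsec
  rw [Real.norm_eq_abs, abs_of_nonneg (sq_nonneg _)]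
  exact sq_primitive_le hsec (Ioc_subset_Icc_self hz)

theorem integrable_pathObjective (hT : 0 ≤ T) (a Ψ φ : ℝ) {Q : X → ℝ} {A V : X × ℝ → ℝ}
    (hQ : MemLp Q 2 μ) (hA : MemLp A 2 (μ.prod (volume.restrict (Ioc 0 T))))
    (hV : MemLp V 2 (μ.prod (volume.restrict (Ioc 0 T)))) :
    Integrable (fun x => pathObjective T a Ψ φ (Q x) (fun t => A (x, t)) (fun t => V (x, t))) μ := by
  have hq : MemLp (fun z : X × ℝ => pathInventory (Q z.1) (fun t => V (z.1, t)) z.2) 2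
      (μ.prod (volume.restrict (Ioc 0 T))) :=
    (hQ.comp_fst _).add (memLp_primitive_prod hV)
  exact (integrable_reward a Ψ φ hq hA hV).integral_prod_left.congr
    (ae_of_all _ fun x => (intervalIntegral.integral_of_le hT).symm)

end Product

theorem objH_eq_integral_pathObjective (P : Measure Ω) (T a Ψ φ : ℝ) (Q₀ : Ω → ℝ)
    (α ν : Ω × ℝ → ℝ) :
    objH P T a Ψ φ Q₀ α ν
      = ∫ x, pathObjective T a Ψ φ (Q₀ x) (fun t => α (x, t)) (fun t => ν (x, t)) ∂P :=
  rfl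

theorem objH_add_smul {P : Measure Ω} [SFinite P] {T : ℝ} (hT : 0 ≤ T) (a Ψ φ : ℝ)
    {Q₀ : Ω → ℝ} {α ν w : Ω × ℝ → ℝ} (hQ₀ : MemLp Q₀ 2 P)
    (hα : MemLp α 2 (P.prod (volume.restrict (Ioc 0 T))))
    (hν : MemLp ν 2 (P.prod (volume.restrict (Ioc 0 T))))
    (hw : MemLp w 2 (P.prod (volume.restrict (Ioc 0 T)))) (ε : ℝ) :
    objH P T a Ψ φ Q₀ α (fun p => ν p + ε * w p)
      = objH P T a Ψ φ Q₀ α ν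
        + ε * ∫ x, pathDerivative T a Ψ φ (Q₀ x) (fun t => α (x, t)) (fun t => ν (x, t))
            (fun t => w (x, t)) ∂P
        + ε ^ 2 * ∫ x, pathObjective T a Ψ φ 0 0 (fun t => w (x, t)) ∂P := by
  simp only [objH_eq_integral_pathObjective]
  refine integral_eq_quadratic (g := fun ε x => pathObjective T a Ψ φ (Q₀ x) (fun t => α (x, t))
    (fun t => ν (x, t) + ε * w (x, t)))
    (fun ε => integrable_pathObjective (V := fun p => ν p + ε * w p) hT a Ψ φ hQ₀ hα
      (hν.add (hw.const_mul ε))) ?_ ε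
  filter_upwards [hα.ae_memLp_prodMk, hν.ae_memLp_prodMk, hw.ae_memLp_prodMk]
    with x hαx hνx hwx ε
  exact pathObjective_add_smul hT hαx hνx hwx ε

theorem gateaux_derivative_general
    (P : Measure Ω) [IsProbabilityMeasure P]
    (T : ℝ) (hT : 0 < T) (a Ψ φ : ℝ)
    (μ : Measure ℝ) (hμ : μ = volume.restrict (Set.Icc (0:ℝ) T))
    (Q₀ : Ω → ℝ) (hQ₀ : MemLp Q₀ 2 P)
    (α : Ω × ℝ → ℝ) (hα : MemLp α 2 (P.prod μ))
    (ν w : Ω × ℝ → ℝ)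
    (hν : MemLp ν 2 (P.prod μ)) (hw : MemLp w 2 (P.prod μ)) :
    Filter.Tendsto
      (fun ε : ℝ =>
        (objH P T a Ψ φ Q₀ α (fun p => ν p + ε * w p) - objH P T a Ψ φ Q₀ α ν) / ε)
      (nhdsWithin 0 {(0:ℝ)}ᶜ)
      (nhds (∫ x, (∫ t in (0:ℝ)..T,
        w (x, t) * (-2 * a * ν (x, t) - 2 * Ψ * inventory Q₀ ν x T
          + ∫ u in t..T, (α (x, u) - 2 * φ * inventory Q₀ ν x u))) ∂P)) := by
  have hIcc : volume.restrict (Icc (0:ℝ) T) = volume.restrict (Ioc 0 T) :=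
    (Measure.restrict_congr_set Ioc_ae_eq_Icc).symm
  rw [hμ, hIcc] at hα hν hw
  simp only [objH_add_smul hT.le a Ψ φ hQ₀ hα hν hw]
  exact tendsto_slope_quadratic _ _ _

/-- Lemma 3.2 of the paper: the Gâteaux derivative of `H` at `ν` in the
direction `w` exists, i.e. the limit as `ε → 0` of `(H(ν+εw) − H(ν))/ε` exists, and equals
`E[∫₀ᵀ w_t·( −2a·ν_t − 2Ψ·q^ν_T + ∫_t^T (α_u − 2φ·q^ν_u) du ) dt]`. -/
theorem gateaux_derivative
    (P : Measure Ω) [IsProbabilityMeasure P]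
    (T : ℝ) (hT : 0 < T) (a Ψ φ : ℝ) (ha : 0 < a) (hΨ : 0 < Ψ) (hφ : 0 ≤ φ)
    (μ : Measure ℝ) (hμ : μ = volume.restrict (Set.Icc (0:ℝ) T))
    (Q₀ : Ω → ℝ) (hQ₀ : MemLp Q₀ 2 P)
    (α : Ω × ℝ → ℝ) (hα : MemLp α 2 (P.prod μ))
    (ν w : Ω × ℝ → ℝ)
    (hν : MemLp ν 2 (P.prod μ)) (hw : MemLp w 2 (P.prod μ)) :
    Filter.Tendsto
      (fun ε : ℝ =>
        (objH P T a Ψ φ Q₀ α (fun p => ν p + ε * w p) - objH P T a Ψ φ Q₀ α ν) / ε)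
      (nhdsWithin 0 {(0:ℝ)}ᶜ)
      (nhds (∫ x, (∫ t in (0:ℝ)..T,
        w (x, t) * (-2 * a * ν (x, t) - 2 * Ψ * inventory Q₀ ν x T
          + ∫ u in t..T, (α (x, u) - 2 * φ * inventory Q₀ ν x u))) ∂P)) :=
  gateaux_derivative_general P T hT a Ψ φ μ hμ Q₀ hQ₀ α hα ν w hν hw
end
end

section
/- Let a>0, φ>0, Ψ>0, T>0 and let h be the explicit function h(t) = −2ξ·(Ψ·cosh(γ(T−t)) + ξ·sinh(γ(T−t)))/(ξ·cosh(γ(T−t)) + Ψ·sinh(γ(T−t))) with γ = √(φ/a), ξ = √(φ·a). If k : ℝ → ℝ is differentiable on [0,T], satisfies k'(t) = 2φ − k(t)²/(2a) for all t ∈ [0,T], and k(T) = −2Ψ, then k(t) = h(t) for all t ∈ [0,T]. -/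
/-!
Both `k` and the closed form `h` solve the autonomous equation `x' = 2φ - x² / (2a)` on `[0, T]`
with the same terminal value. For `h` this is the computation `N' = -γ D`, `D' = -γ N` for its
numerator `N` and denominator `D > 0`, together with `γ ξ = φ` and `ξ² = φ a`. The vector field is
smooth, hence Lipschitz on the compact set of values taken by the two solutions, and Grönwall
uniqueness (run backwards from `T`) identifies them.
-/

open Set Real

theorem ODE_solution_unique_of_locallyLipschitz_of_mem_Icc_left
    {E : Type*} [NormedAddCommGroup E] [NormedSpace ℝ E]
    {v : E → E} (hv : LocallyLipschitz v) {f g : ℝ → E} {a b : ℝ}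
    (hf : ∀ t ∈ Icc a b, HasDerivAt f (v (f t)) t) (hg : ∀ t ∈ Icc a b, HasDerivAt g (v (g t)) t)
    (hb : f b = g b) :
    EqOn f g (Icc a b) := by
  have hfc : ContinuousOn f (Icc a b) := fun t ht ↦ (hf t ht).continuousAt.continuousWithinAt
  have hgc : ContinuousOn g (Icc a b) := fun t ht ↦ (hg t ht).continuousAt.continuousWithinAt
  set K := f '' Icc a b ∪ g '' Icc a b
  have hK : IsCompact K :=
    (isCompact_Icc.image_of_continuousOn hfc).union (isCompact_Icc.image_of_continuousOn hgc)
  obtain ⟨L, hL⟩ := hv.locallyLipschitzOn.exists_lipschitzOnWith_of_compact hK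
  exact ODE_solution_unique_of_mem_Icc_left (v := fun _ ↦ v) (s := fun _ ↦ K) (K := L)
    (fun _ _ ↦ hL) hfc (fun t ht ↦ (hf t (Ioc_subset_Icc_self ht)).hasDerivWithinAt)
    (fun t ht ↦ .inl ⟨t, Ioc_subset_Icc_self ht, rfl⟩)
    hgc (fun t ht ↦ (hg t (Ioc_subset_Icc_self ht)).hasDerivWithinAt)
    (fun t ht ↦ .inr ⟨t, Ioc_subset_Icc_self ht, rfl⟩) hb

theorem mul_cosh_add_mul_sinh_pos {ξ Ψ u : ℝ} (hξ : 0 < ξ) (hΨ : 0 ≤ Ψ) (hu : 0 ≤ u) :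
    0 < ξ * cosh u + Ψ * sinh u := by
  have := one_le_cosh u
  have := sinh_nonneg_iff.mpr hu
  positivity

theorem hasDerivAt_riccati_closedForm {a φ Ψ T γ ξ t : ℝ} {h : ℝ → ℝ}
    (hh : ∀ t, h t = -2 * ξ * (Ψ * cosh (γ * (T - t)) + ξ * sinh (γ * (T - t)))
      / (ξ * cosh (γ * (T - t)) + Ψ * sinh (γ * (T - t))))
    (hγξ : γ * ξ = φ) (hξsq : ξ ^ 2 = φ * a) (ha : a ≠ 0)
    (hD : ξ * cosh (γ * (T - t)) + Ψ * sinh (γ * (T - t)) ≠ 0) :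
    HasDerivAt h (2 * φ - h t ^ 2 / (2 * a)) t := by
  obtain rfl : h = _ := funext hh
  have hu : HasDerivAt (fun t ↦ γ * (T - t)) (-γ) t := by
    simpa using ((hasDerivAt_id t).const_sub T).const_mul γ
  have hN' : HasDerivAt (fun t ↦ Ψ * cosh (γ * (T - t)) + ξ * sinh (γ * (T - t)))
      (-γ * (ξ * cosh (γ * (T - t)) + Ψ * sinh (γ * (T - t)))) t :=
    ((hu.cosh.const_mul Ψ).add (hu.sinh.const_mul ξ)).congr_deriv (by ring)
  have hD' : HasDerivAt (fun t ↦ ξ * cosh (γ * (T - t)) + Ψ * sinh (γ * (T - t)))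
      (-γ * (Ψ * cosh (γ * (T - t)) + ξ * sinh (γ * (T - t)))) t :=
    ((hu.cosh.const_mul ξ).add (hu.sinh.const_mul Ψ)).congr_deriv (by ring)
  refine ((hN'.const_mul (-2 * ξ)).div hD' hD).congr_deriv ?_
  beta_reduce
  subst hγξ
  field_simp
  linear_combination (Ψ * cosh (γ * (T - t)) + ξ * sinh (γ * (T - t))) ^ 2 * hξsq

theorem riccati_solution_unique_general
    (a φ Ψ T : ℝ) (ha : 0 < a) (hφ : 0 < φ) (hΨ : 0 < Ψ)
    (γ ξ : ℝ) (hγ : γ = Real.sqrt (φ / a)) (hξ : ξ = Real.sqrt (φ * a))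
    (h : ℝ → ℝ)
    (hh : ∀ t, h t = -2 * ξ * (Ψ * Real.cosh (γ * (T - t)) + ξ * Real.sinh (γ * (T - t)))
        / (ξ * Real.cosh (γ * (T - t)) + Ψ * Real.sinh (γ * (T - t))))
    (k : ℝ → ℝ)
    (hk : ∀ t ∈ Set.Icc (0:ℝ) T, HasDerivAt k (2 * φ - (k t) ^ 2 / (2 * a)) t)
    (hkT : k T = -2 * Ψ) :
    ∀ t ∈ Set.Icc (0:ℝ) T, k t = h t := by
  have hξ₀ : 0 < ξ := hξ ▸ sqrt_pos.2 (by positivity)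
  have hξsq : ξ ^ 2 = φ * a := hξ ▸ sq_sqrt (by positivity)
  have hγξ : γ * ξ = φ := by
    rw [hγ, hξ, ← sqrt_mul (by positivity), show φ / a * (φ * a) = φ ^ 2 by field_simp]
    exact sqrt_sq hφ.le
  have hh_sol : ∀ t ∈ Icc 0 T, HasDerivAt h (2 * φ - h t ^ 2 / (2 * a)) t := fun t ht ↦
    hasDerivAt_riccati_closedForm hh hγξ hξsq ha.ne' <| ne_of_gt <|
      mul_cosh_add_mul_sinh_pos hξ₀ hΨ.le <| mul_nonneg (hγ ▸ sqrt_nonneg _) (sub_nonneg.2 ht.2)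
  have hhT : h T = -2 * Ψ := by
    simp only [hh, sub_self, mul_zero, cosh_zero, sinh_zero, mul_one, add_zero]
    field_simp
  have hv : LocallyLipschitz fun x : ℝ ↦ 2 * φ - x ^ 2 / (2 * a) :=
    ContDiff.locallyLipschitz (𝕂 := ℝ) (by fun_prop)
  exact ODE_solution_unique_of_locallyLipschitz_of_mem_Icc_left hv hk hh_sol (hkT.trans hhT.symm)

/-- Theorem 3.4 (III) of the paper, uniqueness: any differentiable solution
`k` on `[0,T]` of the Riccati terminal-value problem `k' = 2φ − k²/(2a)`, `k(T) = −2Ψ`,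
coincides on `[0,T]` with the explicit solution
`h(t) = −2ξ·(Ψ·cosh(γ(T−t)) + ξ·sinh(γ(T−t)))/(ξ·cosh(γ(T−t)) + Ψ·sinh(γ(T−t)))`,
where `γ = √(φ/a)` and `ξ = √(φa)`. -/
theorem riccati_solution_unique
    (a φ Ψ T : ℝ) (ha : 0 < a) (hφ : 0 < φ) (hΨ : 0 < Ψ) (hT : 0 < T)
    (γ ξ : ℝ) (hγ : γ = Real.sqrt (φ / a)) (hξ : ξ = Real.sqrt (φ * a))
    (h : ℝ → ℝ)
    (hh : ∀ t, h t = -2 * ξ * (Ψ * Real.cosh (γ * (T - t)) + ξ * Real.sinh (γ * (T - t)))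
        / (ξ * Real.cosh (γ * (T - t)) + Ψ * Real.sinh (γ * (T - t))))
    (k : ℝ → ℝ)
    (hk : ∀ t ∈ Set.Icc (0:ℝ) T, HasDerivAt k (2 * φ - (k t) ^ 2 / (2 * a)) t)
    (hkT : k T = -2 * Ψ) :
    ∀ t ∈ Set.Icc (0:ℝ) T, k t = h t :=
  riccati_solution_unique_general a φ Ψ T ha hφ hΨ γ ξ hγ hξ h hh k hk hkT
end
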